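/- arXiv:2011.05887 — 3 statements merged into one kernel-verified Lean document; each statement's English description precedes it below -/
import Mathlib

section
/- Let α ∈ ℝ, α ≠ 0, let n ≥ 1 be an integer and k₀ = (2n−1)π. Then there exist δ ∈ (0, 1/2), ε₀ > 0 and C > 0 such that for every ε ∈ (0, ε₀) and every k ∈ ℂ with |k − k₀| < δ, k·sin k ≠ 0 and p₁(k,ε) = 0, one has |Im k + (2n−1)²π·ε²| ≤ C·ε³; in particular Im k < 0 for all sufficiently small ε. -/
open Complex

/-- `c(k) = (1 + cos k)/(k sin k)`. -/
noncomputable def cEven (k : ℂ) : ℂ := (1 + Complex.cos k) / (k * Complex.sin k)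

/-- `γ(k) = −ik/(2π)`. -/
noncomputable def gammaCoef (k : ℂ) : ℂ := -Complex.I * k / (2 * (Real.pi : ℂ))

/-- `p₁(k,ε) = ε + (c(k) + ε²γ(k))·α`. -/
noncomputable def pOne (α : ℂ) (k : ℂ) (ε : ℝ) : ℂ :=
  (ε : ℂ) + (cEven k + (ε : ℂ) ^ 2 * gammaCoef k) * α

lemma exp_cubic_bound (x : ℂ) (hx : ‖x‖ ≤ 1) :
    ‖Complex.exp x - (1 + x + x^2/2)‖ ≤ ‖x‖ ^ 3 := by
  have h := Complex.exp_bound hx (n := 3) (by norm_num)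
  have hs : (∑ m ∈ Finset.range 3, x ^ m / m.factorial) = 1 + x + x^2/2 := by
    simp [Finset.sum_range_succ, Nat.factorial]
  rw [hs] at h
  have h3 : (0:ℝ) ≤ ‖x‖ ^ 3 := by positivity
  calc ‖Complex.exp x - (1 + x + x^2/2)‖ ≤
      ‖x‖ ^ 3 * ((3:ℕ).succ * ((3:ℕ).factorial * (3:ℕ) : ℝ)⁻¹) := h
    _ ≤ ‖x‖ ^ 3 := by
        norm_num [Nat.factorial]
        nlinarith

lemma abs_sin_sub_self (z : ℂ) (hz : ‖z‖ ≤ 1) :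
    ‖Complex.sin z - z‖ ≤ ‖z‖ ^ 3 := by
  have h1 := exp_cubic_bound (-z * I) (by simpa using hz)
  have h2 := exp_cubic_bound (z * I) (by simpa using hz)
  have hrw : Complex.sin z - z =
      ((Complex.exp (-z*I) - (1 + (-z*I) + (-z*I)^2/2)) -
       (Complex.exp (z*I) - (1 + (z*I) + (z*I)^2/2))) * I / 2 := by
    rw [Complex.sin]
    ring_nf
    simp [Complex.I_sq]
  rw [hrw]
  rw [norm_div, norm_mul, Complex.norm_I, mul_one]
  have := norm_sub_le (Complex.exp (-z*I) - (1 + (-z*I) + (-z*I)^2/2))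
      ((Complex.exp (z*I) - (1 + (z*I) + (z*I)^2/2)))
  have e1 : ‖z*I‖ = ‖z‖ := by simp
  have e2 : ‖-z*I‖ = ‖z‖ := by simp
  rw [e1] at h2; rw [e2] at h1
  simp only [Complex.norm_two] at *
  nlinarith [norm_nonneg z]

lemma abs_cos_sub_one (z : ℂ) (hz : ‖z‖ ≤ 1) :
    ‖Complex.cos z - 1‖ ≤ ‖z‖ ^ 2 := by
  have h1 := Complex.norm_exp_sub_one_sub_id_le (x := z*I) (by simpa using hz)
  have h2 := Complex.norm_exp_sub_one_sub_id_le (x := -z*I) (by simpa using hz)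
  have hrw : Complex.cos z - 1 =
      ((Complex.exp (z*I) - 1 - z*I) + (Complex.exp (-z*I) - 1 - (-z*I))) / 2 := by
    rw [Complex.cos]; ring
  rw [hrw, norm_div, Complex.norm_two]
  have := norm_add_le (Complex.exp (z*I) - 1 - z*I) (Complex.exp (-z*I) - 1 - (-z*I))
  have e1 : ‖z*I‖ = ‖z‖ := by simp
  have e2 : ‖-z*I‖ = ‖z‖ := by simp
  rw [e1] at h1; rw [e2] at h2
  nlinarith [norm_nonneg z]

lemma key_eq (α : ℝ) (hα : α ≠ 0) (P : ℝ) (hcosP : Complex.cos ((P:ℂ)/2) = 0)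
    (ε : ℝ) (k : ℂ) (hks : k * Complex.sin k ≠ 0)
    (hp : pOne (α : ℂ) k ε = 0) :
    Complex.sin ((k - (P:ℂ))/2) =
      ((k*(ε:ℂ)/(α:ℂ)) - I*k^2*(ε:ℂ)^2/(2*(Real.pi:ℂ))) * Complex.cos ((k - (P:ℂ))/2) := by
  have hπ : (Real.pi : ℂ) ≠ 0 := by
    exact_mod_cast Real.pi_ne_zero
  have hα' : (α : ℂ) ≠ 0 := by exact_mod_cast hα
  have hk : k ≠ 0 := fun h => hks (by simp [h])
  have hsk : Complex.sin k ≠ 0 := fun h => hks (by simp [h])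
  set z := (k - (P:ℂ))/2 with hz
  have hhalf : k/2 = (P:ℂ)/2 + z := by rw [hz]; ring
  set σ := Complex.sin ((P:ℂ)/2) with hσdef
  have hσ : σ^2 = 1 := by
    have := Complex.sin_sq_add_cos_sq ((P:ℂ)/2)
    rw [hcosP] at this
    simpa using this
  have hs2' : Complex.sin (k/2) = σ * Complex.cos z := by
    rw [hhalf, Complex.sin_add, hcosP]; ring
  have hc2' : Complex.cos (k/2) = -(σ * Complex.sin z) := by
    rw [hhalf, Complex.cos_add, hcosP]; ring
  have hsinkz : Complex.sin k = 2 * Complex.sin (k/2) * Complex.cos (k/2) := by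
    rw [show k = 2*(k/2) by ring, Complex.sin_two_mul]; ring_nf
  have h1c : 1 + Complex.cos k = 2 * Complex.cos (k/2)^2 := by
    rw [show k = 2*(k/2) by ring, Complex.cos_two_mul]; ring_nf
  have hc2 : Complex.cos (k/2) ≠ 0 := fun h => hsk (by rw [hsinkz, h]; ring)
  have hsz : Complex.sin z ≠ 0 := by
    intro h
    apply hc2
    rw [hc2', h]; ring
  have hmain : (ε:ℂ) * (k * Complex.sin k) * (2*(Real.pi:ℂ)) +
      ((2*(Real.pi:ℂ))*(1 + Complex.cos k) - (ε:ℂ)^2 * (I*k) * (k * Complex.sin k)) * (α:ℂ) = 0 := by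
    have h : pOne (α:ℂ) k ε * (k * Complex.sin k * (2*(Real.pi:ℂ))) = 0 := by rw [hp]; ring
    rw [pOne, cEven, gammaCoef] at h
    field_simp at h
    linear_combination h
  rw [hsinkz, h1c, hs2', hc2'] at hmain
  have hcanc : (Complex.sin z * ((α:ℂ) * (2*(Real.pi:ℂ)))
      - (k*(ε:ℂ)*(2*(Real.pi:ℂ)) - I*k^2*(ε:ℂ)^2*(α:ℂ)) * Complex.cos z) * Complex.sin z = 0 := by
    linear_combination (1/2 : ℂ) * hmain -
      ((2*(Real.pi:ℂ)*(α:ℂ)*Complex.sin z^2 - 2*(Real.pi:ℂ)*(ε:ℂ)*k*Complex.cos z*Complex.sin z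
        + I*(ε:ℂ)^2*k^2*(α:ℂ)*Complex.cos z*Complex.sin z)) * hσ
  have hfac : Complex.sin z * ((α:ℂ) * (2*(Real.pi:ℂ)))
      - (k*(ε:ℂ)*(2*(Real.pi:ℂ)) - I*k^2*(ε:ℂ)^2*(α:ℂ)) * Complex.cos z = 0 := by
    rcases mul_eq_zero.mp hcanc with h | h
    · exact h
    · exact absurd h hsz
  have h2π : (2*(Real.pi:ℂ)) ≠ 0 := by simp [hπ]
  field_simp
  linear_combination (1:ℂ) * hfac

set_option maxHeartbeats 1000000 in
/-- For real `α ≠ 0`, any zero of `p₁(·,ε)` near `k₀ = (2n−1)π` lies in the lower half-plane,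
with `Im k = −(2n−1)²πε² + O(ε³)`; in particular `Im k < 0` for small `ε`. -/
theorem pOne_zero_lower_half_plane (α : ℝ) (hα : α ≠ 0) (n : ℕ) (hn : 1 ≤ n) (k₀ : ℂ)
    (hk₀ : k₀ = (2 * (n : ℂ) - 1) * (Real.pi : ℂ)) :
    ∃ δ ε₀ C : ℝ, 0 < δ ∧ δ < 1 / 2 ∧ 0 < ε₀ ∧ 0 < C ∧
      ∀ ε : ℝ, 0 < ε → ε < ε₀ →
        ∀ k : ℂ, ‖k - k₀‖ < δ → k * Complex.sin k ≠ 0 →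
          pOne (α : ℂ) k ε = 0 →
          |k.im + (2 * (n : ℝ) - 1) ^ 2 * Real.pi * ε ^ 2| ≤ C * ε ^ 3 ∧ k.im < 0 := by
  have hπ3 := Real.pi_gt_three
  have hn1 : (1:ℝ) ≤ (n:ℝ) := by exact_mod_cast hn
  obtain ⟨P, hPdef⟩ : ∃ P : ℝ, P = (2*(n:ℝ) - 1) * Real.pi := ⟨_, rfl⟩
  have hP : 0 < P := by
    have : (1:ℝ) ≤ 2*(n:ℝ) - 1 := by linarith
    rw [hPdef]; nlinarith
  have hk₀P : k₀ = ((P:ℝ):ℂ) := by rw [hk₀, hPdef]; push_cast; ring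
  have hcosP : Complex.cos (((P:ℝ):ℂ)/2) = 0 := by
    have hrw : ((P:ℝ):ℂ)/2 = (n:ℂ)*(Real.pi:ℂ) - (Real.pi:ℂ)/2 := by
      rw [hPdef]; push_cast; ring
    rw [hrw, Complex.cos_sub, Complex.cos_pi_div_two, Complex.sin_pi_div_two,
      Complex.sin_nat_mul_pi]
    ring
  obtain ⟨A, hAdef⟩ : ∃ A : ℝ, A = P + 1 := ⟨_, rfl⟩
  have hA : 0 < A := by rw [hAdef]; linarith
  have hαpos : 0 < |α| := abs_pos.mpr hα
  obtain ⟨M, hMdef⟩ : ∃ M : ℝ, M = A/|α| + A^2 := ⟨_, rfl⟩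
  have hM : 0 < M := by rw [hMdef]; positivity
  obtain ⟨K, hKdef⟩ : ∃ K : ℝ, K = 2*A^2 + 144*M^3 := ⟨_, rfl⟩
  have hK : 0 < K := by rw [hKdef]; positivity
  obtain ⟨C, hCdef⟩ : ∃ C : ℝ, C = 2*K/|α| + 12*A*M + 72*M^3 := ⟨_, rfl⟩
  have hC : 0 < C := by rw [hCdef]; positivity
  refine ⟨1/4, min 1 (min (|α|/4) (Real.pi/(C+1))), C, by norm_num, by norm_num, ?_, hC, ?_⟩
  · have h1 : 0 < Real.pi/(C+1) := by positivity
    simp only [lt_min_iff]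
    exact ⟨by norm_num, by positivity, h1⟩
  intro ε hε hε' k hkδ hks hp
  have hε1 : ε ≤ 1 := le_of_lt (lt_of_lt_of_le hε' (min_le_left _ _))
  have hεα : ε < |α|/4 := lt_of_lt_of_le hε' (le_trans (min_le_right _ _) (min_le_left _ _))
  have hεπ : ε < Real.pi/(C+1) :=
    lt_of_lt_of_le hε' (le_trans (min_le_right _ _) (min_le_right _ _))
  rw [hk₀P] at hkδ
  obtain ⟨z, hzdef⟩ : ∃ z : ℂ, z = (k - ((P:ℝ):ℂ))/2 := ⟨_, rfl⟩
  obtain ⟨w, hwdef⟩ : ∃ w : ℂ,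
      w = (k*(ε:ℂ)/(α:ℂ)) - I*k^2*(ε:ℂ)^2/(2*(Real.pi:ℂ)) := ⟨_, rfl⟩
  have hE : Complex.sin z = w * Complex.cos z := by
    rw [hzdef, hwdef]; exact key_eq α hα P hcosP ε k hks hp
  have habsz : ‖z‖ < 1/8 := by
    rw [hzdef, norm_div, Complex.norm_two]
    linarith
  have habsz1 : ‖z‖ ≤ 1 := by linarith
  have habsP : ‖((P:ℝ):ℂ)‖ = P := by
    rw [Complex.norm_real, Real.norm_eq_abs, abs_of_pos hP]
  have habsk : ‖k‖ ≤ A := by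
    calc ‖k‖ = ‖(k - ((P:ℝ):ℂ)) + ((P:ℝ):ℂ)‖ := by congr 1; ring
      _ ≤ ‖k - ((P:ℝ):ℂ)‖ + ‖((P:ℝ):ℂ)‖ := norm_add_le _ _
      _ ≤ A := by rw [habsP, hAdef]; linarith
  have hknn := norm_nonneg k
  have hw : ‖w‖ ≤ M * ε := by
    have h2πpos : (0:ℝ) < 2*Real.pi := by linarith
    have e1 : ‖k*(ε:ℂ)/(α:ℂ)‖ = ‖k‖ * ε / |α| := by
      rw [norm_div, norm_mul, Complex.norm_real, Real.norm_eq_abs, Complex.norm_real, Real.norm_eq_abs, abs_of_pos hε]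
    have e2 : ‖I*k^2*(ε:ℂ)^2/(2*(Real.pi:ℂ))‖ =
        ‖k‖^2 * ε^2 / (2*Real.pi) := by
      rw [norm_div, norm_mul, norm_mul, Complex.norm_I, one_mul, norm_pow, norm_pow,
        Complex.norm_real, Real.norm_eq_abs, abs_of_pos hε]
      congr 1
      rw [show (2*(Real.pi:ℂ)) = (((2*Real.pi : ℝ)):ℂ) by push_cast; ring,
        Complex.norm_real, Real.norm_eq_abs, abs_of_pos h2πpos]
    have htri := norm_sub_le (k*(ε:ℂ)/(α:ℂ)) (I*k^2*(ε:ℂ)^2/(2*(Real.pi:ℂ)))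
    rw [e1, e2, ← hwdef] at htri
    have hb1 : ‖k‖ * ε / |α| ≤ A * ε / |α| := by gcongr
    have hb2 : ‖k‖^2 * ε^2 / (2*Real.pi) ≤ A^2 * ε := by
      have hk2 : ‖k‖^2 ≤ A^2 := by nlinarith
      have hε2 : ε^2 ≤ ε := by nlinarith
      have h1 : ‖k‖^2 * ε^2 ≤ A^2 * ε :=
        mul_le_mul hk2 hε2 (by positivity) (by positivity)
      have h2 : ‖k‖^2 * ε^2 / (2*Real.pi) ≤ ‖k‖^2 * ε^2 := by
        apply div_le_self (by positivity) (by linarith)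
      exact le_trans h2 h1
    calc ‖w‖ ≤ A * ε / |α| + A^2 * ε := by linarith
      _ = M * ε := by rw [hMdef]; ring
  have hwnn := norm_nonneg w
  have hznn := norm_nonneg z
  have hcosb : ‖Complex.cos z‖ ≤ 1 + ‖z‖^2 := by
    calc ‖Complex.cos z‖ = ‖1 + (Complex.cos z - 1)‖ := by congr 1; ring
      _ ≤ ‖1‖ + ‖Complex.cos z - 1‖ := norm_add_le _ _
      _ ≤ 1 + ‖z‖^2 := by
          have := abs_cos_sub_one z habsz1
          simp only [norm_one]
          linarith
  have hsinb := abs_sin_sub_self z habsz1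
  have hz3 : ‖z‖ ≤ 3 * ‖w‖ := by
    have e1 : z = w * Complex.cos z + (z - Complex.sin z) := by rw [← hE]; ring
    have h1 : ‖z‖ ≤ ‖w‖ * ‖Complex.cos z‖ +
        ‖z - Complex.sin z‖ := by
      calc ‖z‖ = ‖w * Complex.cos z + (z - Complex.sin z)‖ := by rw [← e1]
        _ ≤ ‖w * Complex.cos z‖ + ‖z - Complex.sin z‖ :=
            norm_add_le _ _
        _ = ‖w‖ * ‖Complex.cos z‖ + ‖z - Complex.sin z‖ := by
            rw [norm_mul]
    have h2 : ‖z - Complex.sin z‖ = ‖Complex.sin z - z‖ := by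
      rw [← norm_neg]; congr 1; ring
    rw [h2] at h1
    have c2' : ‖z‖^2 ≤ 1/64 := by nlinarith
    have c1 : ‖w‖ * ‖Complex.cos z‖ ≤
        ‖w‖ * (1 + ‖z‖^2) := mul_le_mul_of_nonneg_left hcosb hwnn
    have c4 : ‖w‖ * ‖z‖^2 ≤ ‖w‖ * (1/64) :=
      mul_le_mul_of_nonneg_left c2' hwnn
    have c3 : ‖z‖^3 ≤ (1/64) * ‖z‖ := by
      nlinarith [mul_le_mul_of_nonneg_left c2' hznn]
    linarith
  have hzw : ‖z - w‖ ≤ 36 * ‖w‖^3 := by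
    have e1 : z - w = w * (Complex.cos z - 1) + (z - Complex.sin z) := by rw [hE]; ring
    have h1 : ‖z - w‖ ≤ ‖w‖ * ‖z‖^2 + ‖z‖^3 := by
      calc ‖z - w‖ ≤ ‖w * (Complex.cos z - 1)‖ +
          ‖z - Complex.sin z‖ := by rw [e1]; exact norm_add_le _ _
        _ = ‖w‖ * ‖Complex.cos z - 1‖ +
            ‖Complex.sin z - z‖ := by
            rw [norm_mul, ← norm_neg (z - Complex.sin z)]; congr 2; ring
        _ ≤ ‖w‖ * ‖z‖^2 + ‖z‖^3 := by
            have := abs_cos_sub_one z habsz1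
            nlinarith
    have h2 : ‖z‖^2 ≤ 9 * ‖w‖^2 := by nlinarith
    have h3 : ‖z‖^3 ≤ 27 * ‖w‖^3 := by nlinarith
    nlinarith
  obtain ⟨r, hrdef⟩ : ∃ r : ℝ, r = (z - w).im := ⟨_, rfl⟩
  have herr : |r| ≤ 36 * M^3 * ε^3 := by
    have h1 : |r| ≤ ‖z - w‖ := by rw [hrdef]; exact Complex.abs_im_le_norm _
    have h2 : ‖w‖^3 ≤ (M*ε)^3 := pow_le_pow_left₀ hwnn hw 3
    nlinarith
  have hwim : w.im = ε/α * k.im - ε^2/(2*Real.pi) * (k.re^2 - k.im^2) := by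
    have hwalt : w = ((ε/α : ℝ):ℂ) * k - ((ε^2/(2*Real.pi) : ℝ):ℂ) * (I * k^2) := by
      rw [hwdef]
      have hπ : (Real.pi:ℂ) ≠ 0 := by exact_mod_cast Real.pi_ne_zero
      have hα' : (α:ℂ) ≠ 0 := by exact_mod_cast hα
      push_cast
      field_simp
    rw [hwalt, Complex.sub_im, Complex.im_ofReal_mul, Complex.im_ofReal_mul, Complex.I_mul_im,
      pow_two k, Complex.mul_re]
    ring
  have hzim : z.im = k.im/2 := by
    rw [hzdef]
    simp [Complex.div_im, Complex.sub_im, Complex.ofReal_im, Complex.normSq]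
  have hIm' : k.im = 2*(ε/α)*k.im - (ε^2/Real.pi)*(k.re^2 - k.im^2) + 2*r := by
    have h1 : z.im = w.im + r := by rw [hrdef]; simp [Complex.sub_im]
    have h2 : k.im = 2*(w.im + r) := by rw [← h1, hzim]; ring
    linear_combination h2 + 2*hwim
  clear hp hks hE hcosP hk₀ hk₀P hsinb hcosb hkδ
  have habs_sub : |k.re^2 - k.im^2| ≤ k.re^2 + k.im^2 := by
    calc |k.re^2 - k.im^2| ≤ |k.re^2| + |k.im^2| := abs_sub _ _
      _ = k.re^2 + k.im^2 := by
          rw [_root_.abs_of_nonneg (sq_nonneg k.re), _root_.abs_of_nonneg (sq_nonneg k.im)]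
  have hxy : k.re^2 + k.im^2 ≤ A^2 := by
    have h0 := Complex.sq_norm k
    have h1 : Complex.normSq k = k.re^2 + k.im^2 := by
      rw [Complex.normSq_apply]; ring
    have h2 : ‖k‖^2 ≤ A^2 := pow_le_pow_left₀ hknn habsk 2
    rw [h0, h1] at h2
    linarith
  have hdiv1 : ε^2/Real.pi ≤ ε^2 := div_le_self (by positivity) (by linarith)
  have hy : |k.im| ≤ K * ε^2 := by
    have h5 : |k.im| ≤ 2*(ε/|α|) * |k.im| + (ε^2/Real.pi) * |k.re^2 - k.im^2| + 2 * |r| := by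
      calc |k.im| = |2*(ε/α)*k.im - (ε^2/Real.pi)*(k.re^2 - k.im^2) + 2*r| := by rw [← hIm']
        _ ≤ |2*(ε/α)*k.im| + |(ε^2/Real.pi)*(k.re^2 - k.im^2)| + |2*r| := by
            have h6 := abs_add_three (2*(ε/α)*k.im) (-((ε^2/Real.pi)*(k.re^2 - k.im^2))) (2*r)
            rw [abs_neg] at h6
            calc |2*(ε/α)*k.im - (ε^2/Real.pi)*(k.re^2 - k.im^2) + 2*r|
                = |2*(ε/α)*k.im + -((ε^2/Real.pi)*(k.re^2 - k.im^2)) + 2*r| := by ring_nf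
              _ ≤ _ := h6
        _ = 2*(ε/|α|) * |k.im| + (ε^2/Real.pi) * |k.re^2 - k.im^2| + 2 * |r| := by
            rw [abs_mul, abs_mul, abs_mul, abs_mul, abs_div, abs_of_pos hε,
              abs_of_pos (show (0:ℝ) < ε^2/Real.pi by positivity)]
            norm_num
    have h6 : 2*(ε/|α|) ≤ 1/2 := by
      have h61 : ε/|α| < 1/4 := (div_lt_iff₀ hαpos).mpr (by linarith)
      linarith
    have hDa : |k.re^2 - k.im^2| ≤ A^2 := le_trans habs_sub hxy
    have h7 : (ε^2/Real.pi) * |k.re^2 - k.im^2| ≤ ε^2 * A^2 := by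
      have h71 : (ε^2/Real.pi) * |k.re^2 - k.im^2| ≤ ε^2 * |k.re^2 - k.im^2| :=
        mul_le_mul_of_nonneg_right hdiv1 (abs_nonneg _)
      have h72 : ε^2 * |k.re^2 - k.im^2| ≤ ε^2 * A^2 :=
        mul_le_mul_of_nonneg_left hDa (sq_nonneg ε)
      linarith
    have he32 : ε^3 ≤ ε^2 := pow_le_pow_of_le_one hε.le hε1 (by norm_num)
    have h8 : |r| ≤ 36*M^3*ε^2 := by
      have h81 : 36*M^3*ε^3 ≤ 36*M^3*ε^2 :=
        mul_le_mul_of_nonneg_left he32 (by positivity)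
      linarith
    have h9 : 2*(ε/|α|) * |k.im| ≤ (1/2) * |k.im| :=
      mul_le_mul_of_nonneg_right h6 (abs_nonneg _)
    rw [hKdef]
    linarith
  have hD : |k.re^2 - k.im^2 - P^2| ≤ 12*A*M*ε := by
    have hre : k.re^2 - k.im^2 - P^2 = (k^2 - ((P:ℝ):ℂ)^2).re := by
      simp [pow_two, Complex.mul_re, Complex.sub_re, Complex.ofReal_re, Complex.ofReal_im]
    have h1 : |k.re^2 - k.im^2 - P^2| ≤ ‖k^2 - ((P:ℝ):ℂ)^2‖ := by
      rw [hre]; exact Complex.abs_re_le_norm _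
    have h2 : ‖k^2 - ((P:ℝ):ℂ)^2‖ =
        ‖k - ((P:ℝ):ℂ)‖ * ‖k + ((P:ℝ):ℂ)‖ := by
      rw [← norm_mul]; congr 1; ring
    have h3 : ‖k - ((P:ℝ):ℂ)‖ = 2 * ‖z‖ := by
      rw [hzdef, norm_div, Complex.norm_two]; ring
    have h4 : ‖k + ((P:ℝ):ℂ)‖ ≤ 2*A := by
      calc ‖k + ((P:ℝ):ℂ)‖ ≤ ‖k‖ + ‖((P:ℝ):ℂ)‖ :=
          norm_add_le _ _
        _ ≤ 2*A := by rw [habsP]; rw [hAdef] at habsk ⊢; linarith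
    have h5 : ‖z‖ ≤ 3*M*ε := by linarith
    rw [h2, h3] at h1
    have h6 : 2*‖z‖ * ‖k + ((P:ℝ):ℂ)‖ ≤ (2*(3*M*ε))*(2*A) :=
      mul_le_mul (by linarith) h4 (norm_nonneg _) (by positivity)
    calc |k.re^2 - k.im^2 - P^2| ≤ 2*‖z‖ * ‖k + ((P:ℝ):ℂ)‖ := h1
      _ ≤ (2*(3*M*ε))*(2*A) := h6
      _ = 12*A*M*ε := by ring
  have hππ : (ε^2/Real.pi)*P^2 = (2*(n:ℝ)-1)^2*Real.pi*ε^2 := by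
    rw [hPdef]
    have hπ0 : Real.pi ≠ 0 := Real.pi_ne_zero
    field_simp
  have hTeq : k.im + (2*(n:ℝ)-1)^2*Real.pi*ε^2 =
      2*(ε/α)*k.im - (ε^2/Real.pi)*(k.re^2 - k.im^2 - P^2) + 2*r := by
    have h0 : (ε^2/Real.pi)*(k.re^2 - k.im^2 - P^2) =
        (ε^2/Real.pi)*(k.re^2 - k.im^2) - (ε^2/Real.pi)*P^2 := by ring
    rw [h0, hππ]
    linarith [hIm']
  have hfinal : |k.im + (2*(n:ℝ)-1)^2*Real.pi*ε^2| ≤ C * ε^3 := by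
    have htri : |k.im + (2*(n:ℝ)-1)^2*Real.pi*ε^2| ≤
        2*(ε/|α|) * |k.im| + (ε^2/Real.pi) * |k.re^2 - k.im^2 - P^2| + 2 * |r| := by
      calc |k.im + (2*(n:ℝ)-1)^2*Real.pi*ε^2|
          = |2*(ε/α)*k.im - (ε^2/Real.pi)*(k.re^2 - k.im^2 - P^2) + 2*r| := by rw [hTeq]
        _ ≤ |2*(ε/α)*k.im| + |(ε^2/Real.pi)*(k.re^2 - k.im^2 - P^2)| + |2*r| := by
            have h6 := abs_add_three (2*(ε/α)*k.im)
              (-((ε^2/Real.pi)*(k.re^2 - k.im^2 - P^2))) (2*r)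
            rw [abs_neg] at h6
            calc |2*(ε/α)*k.im - (ε^2/Real.pi)*(k.re^2 - k.im^2 - P^2) + 2*r|
                = |2*(ε/α)*k.im + -((ε^2/Real.pi)*(k.re^2 - k.im^2 - P^2)) + 2*r| := by ring_nf
              _ ≤ _ := h6
        _ = 2*(ε/|α|) * |k.im| + (ε^2/Real.pi) * |k.re^2 - k.im^2 - P^2| + 2 * |r| := by
            rw [abs_mul, abs_mul, abs_mul, abs_mul, abs_div, abs_of_pos hε,
              abs_of_pos (show (0:ℝ) < ε^2/Real.pi by positivity)]
            norm_num
    have ht1 : 2*(ε/|α|) * |k.im| ≤ 2*K/|α| * ε^3 := by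
      have h1 : ε * |k.im| ≤ ε*(K*ε^2) := mul_le_mul_of_nonneg_left hy hε.le
      calc 2*(ε/|α|) * |k.im| = (2/|α|)*(ε * |k.im|) := by ring
        _ ≤ (2/|α|)*(ε*(K*ε^2)) := mul_le_mul_of_nonneg_left h1 (by positivity)
        _ = 2*K/|α| * ε^3 := by ring
    have ht2 : (ε^2/Real.pi) * |k.re^2 - k.im^2 - P^2| ≤ 12*A*M*ε^3 := by
      have h1 : (ε^2/Real.pi) * |k.re^2 - k.im^2 - P^2| ≤ ε^2 * |k.re^2 - k.im^2 - P^2| :=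
        mul_le_mul_of_nonneg_right hdiv1 (abs_nonneg _)
      have h2 : ε^2 * |k.re^2 - k.im^2 - P^2| ≤ ε^2 * (12*A*M*ε) :=
        mul_le_mul_of_nonneg_left hD (sq_nonneg ε)
      have h3 : ε^2 * (12*A*M*ε) = 12*A*M*ε^3 := by ring
      linarith
    have ht3 : 2 * |r| ≤ 72*M^3*ε^3 := by linarith
    rw [hCdef]
    linarith
  refine ⟨hfinal, ?_⟩
  have h1 : k.im + (2*(n:ℝ)-1)^2*Real.pi*ε^2 ≤ C*ε^3 := (abs_le.mp hfinal).2
  have h2 : (1:ℝ) ≤ (2*(n:ℝ)-1)^2 := by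
    calc (1:ℝ) = 1^2 := by norm_num
      _ ≤ (2*(n:ℝ)-1)^2 := pow_le_pow_left₀ (by norm_num) (by linarith) 2
  have h3 : C*ε < Real.pi := by
    have h31 : ε*(C+1) < Real.pi := (lt_div_iff₀ (by positivity : (0:ℝ) < C+1)).mp hεπ
    linarith [mul_pos hε hC]
  have f1 : Real.pi*ε^2 ≤ (2*(n:ℝ)-1)^2*(Real.pi*ε^2) :=
    le_mul_of_one_le_left (by positivity) h2
  have f2 : C*ε*ε^2 < Real.pi*ε^2 := mul_lt_mul_of_pos_right h3 (by positivity)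
  linarith [f1, f2, h1]
end

section
/- Let α ∈ ℝ, α ≠ 0, and let n ≥ 1 be an integer. For ε > 0 set k_ε := (2n−1)π + 2(2n−1)π·ε/α. Then there exist ε₀ > 0 and C > 0 such that for every ε ∈ (0, ε₀): k_ε·sin k_ε ≠ 0, cos k_ε − 1 ≠ 0, and | q₁(k_ε,ε)·(k_ε·sin k_ε)/(α·(cos k_ε − 1)) − 1 | ≤ C·ε. -/
open Complex

/-- `c₋(k) = (cos k − 1)/(k sin k)`. -/
noncomputable def cOdd (k : ℂ) : ℂ := (Complex.cos k - 1) / (k * Complex.sin k)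

/-- `q₁(k,ε) = ε + (c₋(k) + ε²γ(k))·α`. -/
noncomputable def qOne (α : ℂ) (k : ℂ) (ε : ℝ) : ℂ :=
  (ε : ℂ) + (cOdd k + (ε : ℂ) ^ 2 * gammaCoef k) * α

lemma qOne_identity (α k : ℂ) (ε : ℝ) (hα : α ≠ 0)
    (hks : k * Complex.sin k ≠ 0) (hc : Complex.cos k - 1 ≠ 0) :
    qOne α k ε * (k * Complex.sin k) / (α * (Complex.cos k - 1)) - 1
      = ((ε : ℂ) / α + (ε : ℂ) ^ 2 * gammaCoef k) * (k * Complex.sin k)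
          / (Complex.cos k - 1) := by
  unfold qOne cOdd
  have hk0 : k ≠ 0 := left_ne_zero_of_mul hks
  have hs0 : Complex.sin k ≠ 0 := right_ne_zero_of_mul hks
  field_simp
  ring

/-- At the even-symmetry resonant frequency `k_ε = (2n−1)π + 2(2n−1)πε/α`, the odd
characteristic function satisfies `q₁(k_ε,ε)·(k_ε sin k_ε)/(α(cos k_ε − 1)) = 1 + O(ε)`. -/
theorem qOne_nonresonant_at_even_resonance (α : ℝ) (hα : α ≠ 0) (n : ℕ) (hn : 1 ≤ n)
    (kres : ℝ → ℝ)
    (hkres : ∀ ε : ℝ, kres ε = (2 * (n : ℝ) - 1) * Real.pi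
      + 2 * (2 * (n : ℝ) - 1) * Real.pi * ε / α) :
    ∃ ε₀ C : ℝ, 0 < ε₀ ∧ 0 < C ∧
      ∀ ε : ℝ, 0 < ε → ε < ε₀ →
        kres ε * Real.sin (kres ε) ≠ 0 ∧
        Real.cos (kres ε) - 1 ≠ 0 ∧
        ‖qOne (α : ℂ) ((kres ε : ℝ) : ℂ) ε
            * ((kres ε : ℝ) * Real.sin (kres ε) : ℝ)
            / ((α : ℂ) * ((Real.cos (kres ε) - 1 : ℝ) : ℂ)) - 1‖ ≤ C * ε := by
  have hπ : (0:ℝ) < Real.pi := Real.pi_pos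
  have hπ3 : (3:ℝ) < Real.pi := Real.pi_gt_three
  set M : ℝ := 2 * (n : ℝ) - 1 with hMdef
  have hn1 : (1:ℝ) ≤ (n : ℝ) := by exact_mod_cast hn
  have hM : 1 ≤ M := by simp only [hMdef]; linarith
  have hM0 : 0 < M := by linarith
  have ha : 0 < |α| := abs_pos.mpr hα
  set a : ℝ := |α| with hadef
  clear_value a
  refine ⟨min 1 (a / (8 * M * Real.pi)),
    (1 / a + (M * Real.pi + 1)) * ((M * Real.pi + 1) * (2 * M * Real.pi / a)) + 1,
    lt_min one_pos (by positivity), by positivity, ?_⟩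
  intro ε hε hε'
  have hε1 : ε < 1 := lt_of_lt_of_le hε' (min_le_left _ _)
  have hε2 : ε < a / (8 * M * Real.pi) := lt_of_lt_of_le hε' (min_le_right _ _)
  set t : ℝ := 2 * M * Real.pi * ε / α with htdef
  clear_value t
  have hk : kres ε = M * Real.pi + t := by rw [hkres ε, htdef]
  have habs_t : |t| = 2 * M * Real.pi * ε / a := by
    rw [htdef, abs_div, abs_of_pos (by positivity : (0:ℝ) < 2 * M * Real.pi * ε), hadef]
  have ht_le : |t| ≤ 1 / 4 := by
    rw [habs_t]
    have hε2' : ε * (8 * M * Real.pi) < a :=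
      (lt_div_iff₀ (by positivity : (0:ℝ) < 8 * M * Real.pi)).mp hε2
    rw [div_le_iff₀ ha]
    nlinarith
  have ht_bounds := abs_le.mp ht_le
  have ht_ne : t ≠ 0 := by
    rw [htdef]
    exact div_ne_zero (by positivity) hα
  -- trig identities
  have hshift : kres ε = (t - Real.pi) + (n : ℤ) * (2 * Real.pi) := by
    rw [hk, hMdef]; push_cast; ring
  have hsin : Real.sin (kres ε) = -Real.sin t := by
    rw [hshift, Real.sin_add_int_mul_two_pi, Real.sin_sub_pi]
  have hcos : Real.cos (kres ε) = -Real.cos t := by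
    rw [hshift, Real.cos_add_int_mul_two_pi, Real.cos_sub_pi]
  have hcos_t_pos : 0 < Real.cos t :=
    Real.cos_pos_of_mem_Ioo ⟨by linarith, by linarith⟩
  have hcos_t_le : Real.cos t ≤ 1 := Real.cos_le_one t
  have hsin_t_ne : Real.sin t ≠ 0 := by
    rcases lt_or_gt_of_ne ht_ne with h | h
    · have h1 : 0 < Real.sin (-t) :=
        Real.sin_pos_of_pos_of_lt_pi (by linarith) (by linarith)
      rw [Real.sin_neg] at h1; linarith
    · have h1 : 0 < Real.sin t :=
        Real.sin_pos_of_pos_of_lt_pi h (by linarith)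
      linarith
  have hk_pos : 0 < kres ε := by
    rw [hk]; nlinarith
  have hks_ne : kres ε * Real.sin (kres ε) ≠ 0 :=
    mul_ne_zero (ne_of_gt hk_pos) (by rw [hsin]; exact neg_ne_zero.mpr hsin_t_ne)
  have hc_ne : Real.cos (kres ε) - 1 ≠ 0 := by
    rw [hcos]; intro h; nlinarith
  refine ⟨hks_ne, hc_ne, ?_⟩
  -- complex nonvanishing
  have hαC : (α : ℂ) ≠ 0 := Complex.ofReal_ne_zero.mpr hα
  have hksC : ((kres ε : ℝ) : ℂ) * Complex.sin ((kres ε : ℝ) : ℂ) ≠ 0 := by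
    rw [← Complex.ofReal_sin, ← Complex.ofReal_mul]
    exact Complex.ofReal_ne_zero.mpr hks_ne
  have hcC : Complex.cos ((kres ε : ℝ) : ℂ) - 1 ≠ 0 := by
    rw [← Complex.ofReal_sin] at hksC
    rw [← Complex.ofReal_cos, ← Complex.ofReal_one, ← Complex.ofReal_sub]
    exact Complex.ofReal_ne_zero.mpr hc_ne
  have hgoal_eq :
      qOne (α : ℂ) ((kres ε : ℝ) : ℂ) ε
          * ((kres ε : ℝ) * Real.sin (kres ε) : ℝ)
          / ((α : ℂ) * ((Real.cos (kres ε) - 1 : ℝ) : ℂ)) - 1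
        = ((ε : ℂ) / (α : ℂ) + (ε : ℂ) ^ 2 * gammaCoef ((kres ε : ℝ) : ℂ))
            * (((kres ε : ℝ) : ℂ) * Complex.sin ((kres ε : ℝ) : ℂ))
            / (Complex.cos ((kres ε : ℝ) : ℂ) - 1) := by
    rw [← qOne_identity (α : ℂ) ((kres ε : ℝ) : ℂ) ε hαC hksC hcC]
    push_cast [Complex.ofReal_sin, Complex.ofReal_cos]
    ring_nf
  rw [hgoal_eq]
  rw [norm_div, norm_mul]
  -- bounds on the pieces
  have hk_abs : ‖((kres ε : ℝ) : ℂ)‖ = |kres ε| := by rw [Complex.norm_real, Real.norm_eq_abs]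
  have hk_le : |kres ε| ≤ M * Real.pi + 1 := by
    rw [abs_of_pos hk_pos, hk]; linarith
  have hX : ‖(ε : ℂ) / (α : ℂ) + (ε : ℂ) ^ 2 * gammaCoef ((kres ε : ℝ) : ℂ)‖
      ≤ ε / a + ε ^ 2 * (M * Real.pi + 1) := by
    refine le_trans (norm_add_le _ _) ?_
    have h1 : ‖(ε : ℂ) / (α : ℂ)‖ = ε / a := by
      rw [norm_div, Complex.norm_real, Real.norm_eq_abs, Complex.norm_real, Real.norm_eq_abs, abs_of_pos hε, hadef]
    have h2 : ‖gammaCoef ((kres ε : ℝ) : ℂ)‖ ≤ M * Real.pi + 1 := by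
      unfold gammaCoef
      rw [norm_div, norm_mul, norm_mul]
      simp only [norm_neg, Complex.norm_I, one_mul, Complex.norm_real, Real.norm_eq_abs,
        Complex.norm_two]
      rw [abs_of_pos hπ]
      have h2π : (1:ℝ) ≤ 2 * Real.pi := by linarith
      calc |kres ε| / (2 * Real.pi) ≤ |kres ε| / 1 :=
            div_le_div_of_nonneg_left (abs_nonneg _) one_pos h2π
        _ = |kres ε| := by ring
        _ ≤ M * Real.pi + 1 := hk_le
    have h3 : ‖(ε : ℂ) ^ 2 * gammaCoef ((kres ε : ℝ) : ℂ)‖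
        ≤ ε ^ 2 * (M * Real.pi + 1) := by
      rw [norm_mul, norm_pow, Complex.norm_real, Real.norm_eq_abs, abs_of_pos hε]
      exact mul_le_mul_of_nonneg_left h2 (by positivity)
    exact add_le_add (le_of_eq h1) h3
  have hY : ‖((kres ε : ℝ) : ℂ) * Complex.sin ((kres ε : ℝ) : ℂ)‖
      ≤ (M * Real.pi + 1) * (2 * M * Real.pi * ε / a) := by
    rw [norm_mul, hk_abs, ← Complex.ofReal_sin, Complex.norm_real, Real.norm_eq_abs]
    have hsin_le : |Real.sin (kres ε)| ≤ 2 * M * Real.pi * ε / a := by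
      rw [hsin, abs_neg, ← habs_t]
      exact Real.abs_sin_le_abs
    exact mul_le_mul hk_le hsin_le (abs_nonneg _) (by positivity)
  have hZ : 1 ≤ ‖Complex.cos ((kres ε : ℝ) : ℂ) - 1‖ := by
    rw [← Complex.ofReal_cos, ← Complex.ofReal_one, ← Complex.ofReal_sub,
      Complex.norm_real, Real.norm_eq_abs, hcos]
    rw [abs_of_nonpos (by linarith)]
    linarith
  have hXY : ‖(ε : ℂ) / (α : ℂ) + (ε : ℂ) ^ 2 * gammaCoef ((kres ε : ℝ) : ℂ)‖
        * ‖((kres ε : ℝ) : ℂ) * Complex.sin ((kres ε : ℝ) : ℂ)‖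
      ≤ (ε / a + ε ^ 2 * (M * Real.pi + 1))
        * ((M * Real.pi + 1) * (2 * M * Real.pi * ε / a)) :=
    mul_le_mul hX hY (norm_nonneg _) (by positivity)
  calc ‖(ε : ℂ) / (α : ℂ) + (ε : ℂ) ^ 2 * gammaCoef ((kres ε : ℝ) : ℂ)‖
        * ‖((kres ε : ℝ) : ℂ) * Complex.sin ((kres ε : ℝ) : ℂ)‖
        / ‖Complex.cos ((kres ε : ℝ) : ℂ) - 1‖
      ≤ ‖(ε : ℂ) / (α : ℂ) + (ε : ℂ) ^ 2 * gammaCoef ((kres ε : ℝ) : ℂ)‖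
        * ‖((kres ε : ℝ) : ℂ) * Complex.sin ((kres ε : ℝ) : ℂ)‖ :=
        div_le_self (by positivity) hZ
    _ ≤ (ε / a + ε ^ 2 * (M * Real.pi + 1))
        * ((M * Real.pi + 1) * (2 * M * Real.pi * ε / a)) := hXY
    _ ≤ ((1 / a + (M * Real.pi + 1)) * ((M * Real.pi + 1) * (2 * M * Real.pi / a)) + 1)
        * ε := by
        set B := (M * Real.pi + 1) * (2 * M * Real.pi / a) with hBdef
        clear_value B
        have hB : (0:ℝ) < B := by rw [hBdef]; positivity
        set D := 1 / a + (M * Real.pi + 1) with hDdef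
        clear_value D
        have hD : (0:ℝ) < D := by rw [hDdef]; positivity
        have e1 : (M * Real.pi + 1) * (2 * M * Real.pi * ε / a) = B * ε := by
          rw [hBdef]; ring
        have e2 : ε / a + ε ^ 2 * (M * Real.pi + 1) ≤ D * ε := by
          have hq : ε ^ 2 ≤ ε := by
            calc ε ^ 2 = ε * ε := sq ε
              _ ≤ 1 * ε := mul_le_mul_of_nonneg_right hε1.le hε.le
              _ = ε := one_mul ε
          have hq2 : ε ^ 2 * (M * Real.pi + 1) ≤ ε * (M * Real.pi + 1) :=
            mul_le_mul_of_nonneg_right hq (by positivity)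
          have hDe : D * ε = ε / a + ε * (M * Real.pi + 1) := by rw [hDdef]; ring
          rw [hDe]
          exact add_le_add le_rfl hq2
        calc (ε / a + ε ^ 2 * (M * Real.pi + 1))
              * ((M * Real.pi + 1) * (2 * M * Real.pi * ε / a))
            ≤ (D * ε) * (B * ε) := by
              rw [e1]
              exact mul_le_mul_of_nonneg_right e2 (by positivity)
          _ = D * B * ε * ε := by ring
          _ ≤ D * B * ε * 1 :=
              mul_le_mul_of_nonneg_left hε1.le (by positivity)
          _ = D * B * ε := by ring
          _ ≤ (D * B + 1) * ε := by
              have h7 : (D * B + 1) * ε = D * B * ε + ε := by ring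
              linarith
end

section
/- Let α ∈ ℝ, α ≠ 0, and let n ≥ 1 be an integer. For ε > 0 set k_ε := 2nπ + 4nπ·ε/α. Then there exist ε₀ > 0 and C > 0 such that for every ε ∈ (0, ε₀): k_ε·sin k_ε ≠ 0, cos k_ε + 1 ≠ 0, and | p₁(k_ε,ε)·(k_ε·sin k_ε)/(α·(cos k_ε + 1)) − 1 | ≤ C·ε. -/
open Complex

set_option maxHeartbeats 1000000 in
/-- At the odd-symmetry resonant frequency `k_ε = 2nπ + 4nπε/α`, the even characteristic
function satisfies `p₁(k_ε,ε)·(k_ε sin k_ε)/(α(cos k_ε + 1)) = 1 + O(ε)`. -/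
theorem pOne_nonresonant_at_odd_resonance (α : ℝ) (hα : α ≠ 0) (n : ℕ) (hn : 1 ≤ n)
    (kres : ℝ → ℝ)
    (hkres : ∀ ε : ℝ, kres ε = 2 * (n : ℝ) * Real.pi + 4 * (n : ℝ) * Real.pi * ε / α) :
    ∃ ε₀ C : ℝ, 0 < ε₀ ∧ 0 < C ∧
      ∀ ε : ℝ, 0 < ε → ε < ε₀ →
        kres ε * Real.sin (kres ε) ≠ 0 ∧
        Real.cos (kres ε) + 1 ≠ 0 ∧
        ‖pOne (α : ℂ) ((kres ε : ℝ) : ℂ) ε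
            * ((kres ε : ℝ) * Real.sin (kres ε) : ℝ)
            / ((α : ℂ) * ((Real.cos (kres ε) + 1 : ℝ) : ℂ)) - 1‖ ≤ C * ε := by
  have hπ : 0 < Real.pi := Real.pi_pos
  have hn' : (1:ℝ) ≤ (n:ℝ) := by exact_mod_cast hn
  have hn0 : (0:ℝ) < (n:ℝ) := by linarith
  set a := |α| with ha
  have ha0 : 0 < a := abs_pos.mpr hα
  set B : ℝ := 2 * n * Real.pi + 1 with hB
  have hB0 : 0 < B := by positivity
  refine ⟨min 1 (a / (8 * n * Real.pi)),
    ((1 + B * a) * (B * (4 * n * Real.pi / a))) / a, ?_, ?_, ?_⟩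
  · exact lt_min one_pos (by positivity)
  · positivity
  intro ε hε hεlt
  have hε1 : ε < 1 := lt_of_lt_of_le hεlt (min_le_left _ _)
  have hε2 : ε < a / (8 * n * Real.pi) := lt_of_lt_of_le hεlt (min_le_right _ _)
  set δ : ℝ := 4 * n * Real.pi * ε / α with hδ
  have hK : kres ε = 2 * n * Real.pi + δ := hkres ε
  have hδabs : |δ| = 4 * n * Real.pi * ε / a := by
    rw [hδ, abs_div, abs_of_pos (by positivity)]
  have hδhalf : |δ| < 1 / 2 := by
    have h8 : ε * (8 * n * Real.pi) < a := (lt_div_iff₀ (by positivity)).mp hε2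
    rw [hδabs, div_lt_iff₀ ha0]
    nlinarith
  have hδ0 : δ ≠ 0 := by
    rw [hδ]; exact div_ne_zero (by positivity) hα
  -- trig values
  have hsin : Real.sin (kres ε) = Real.sin δ := by
    have h2 : 2 * (n:ℝ) * Real.pi = ((2*n : ℕ):ℝ) * Real.pi := by push_cast; ring
    rw [hK, Real.sin_add, h2, Real.sin_nat_mul_pi]
    have h3 : ((2*n : ℕ):ℝ) * Real.pi = (n:ℝ) * (2 * Real.pi) := by push_cast; ring
    rw [h3, Real.cos_nat_mul_two_pi]
    ring
  have hcos : Real.cos (kres ε) = Real.cos δ := by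
    have h2 : 2 * (n:ℝ) * Real.pi = ((2*n : ℕ):ℝ) * Real.pi := by push_cast; ring
    rw [hK, Real.cos_add, h2, Real.sin_nat_mul_pi]
    have h3 : ((2*n : ℕ):ℝ) * Real.pi = (n:ℝ) * (2 * Real.pi) := by push_cast; ring
    rw [h3, Real.cos_nat_mul_two_pi]
    ring
  have hπ3 : (3:ℝ) < Real.pi := Real.pi_gt_three
  have habsδ' : -(1/2) < δ ∧ δ < 1/2 := abs_lt.mp hδhalf
  have hs0 : Real.sin δ ≠ 0 := by
    rw [Ne, Real.sin_eq_zero_iff_of_lt_of_lt (by linarith [habsδ'.1]) (by linarith [habsδ'.2])]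
    exact hδ0
  have hKpos : 0 < kres ε := by
    rw [hK]; nlinarith [habsδ'.1]
  have hK0 : kres ε ≠ 0 := ne_of_gt hKpos
  have hcpos : 0 < Real.cos δ := by
    apply Real.cos_pos_of_mem_Ioo
    constructor <;> [linarith [habsδ'.1]; linarith [habsδ'.2]]
  have hc1 : 0 < Real.cos (kres ε) + 1 := by rw [hcos]; linarith
  refine ⟨mul_ne_zero hK0 (hsin ▸ hs0), ne_of_gt hc1, ?_⟩
  -- complex nonzero casts
  set K : ℝ := kres ε
  have hKc : (K:ℂ) ≠ 0 := by exact_mod_cast hK0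
  have hsc : Complex.sin (K:ℂ) ≠ 0 := by
    rw [← Complex.ofReal_sin]
    exact_mod_cast (hsin ▸ hs0)
  have hαc : (α:ℂ) ≠ 0 := by exact_mod_cast hα
  have hcc : ((Real.cos K + 1 : ℝ):ℂ) ≠ 0 := by exact_mod_cast ne_of_gt hc1
  have hπc : ((Real.pi:ℝ):ℂ) ≠ 0 := by exact_mod_cast ne_of_gt hπ
  -- key algebraic identity
  have key : pOne (α:ℂ) (K:ℂ) ε * ((K * Real.sin K : ℝ):ℂ)
      / ((α:ℂ) * ((Real.cos K + 1 : ℝ):ℂ)) - 1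
      = ((ε:ℂ) + (ε:ℂ)^2 * gammaCoef (K:ℂ) * (α:ℂ)) * ((K * Real.sin K : ℝ):ℂ)
      / ((α:ℂ) * ((Real.cos K + 1 : ℝ):ℂ)) := by
    have hcc' : Complex.cos (K:ℂ) + 1 ≠ 0 := by
      rw [← Complex.ofReal_cos]
      intro h
      apply hcc
      push_cast
      rw [← Complex.ofReal_cos]
      linear_combination h
    unfold pOne cEven gammaCoef
    push_cast
    field_simp
    ring
  rw [key]
  -- bound
  have habsγ : ‖gammaCoef (K:ℂ)‖ ≤ B := by
    unfold gammaCoef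
    rw [norm_div, norm_mul, norm_neg, Complex.norm_I, one_mul]
    rw [Complex.norm_real, Real.norm_eq_abs]
    have h2π : ‖2 * (Real.pi:ℂ)‖ = 2 * Real.pi := by
      rw [norm_mul, Complex.norm_two, Complex.norm_real, Real.norm_eq_abs, abs_of_pos hπ]
    rw [h2π]
    have hKb : |K| ≤ B := by
      rw [abs_of_pos hKpos, hK, hB]
      nlinarith [habsδ'.2]
    calc |K| / (2 * Real.pi) ≤ B / (2 * Real.pi) := by gcongr
      _ ≤ B := by
          rw [div_le_iff₀ (by positivity)]; nlinarith
  have habsKs : |K * Real.sin K| ≤ B * (4 * n * Real.pi * ε / a) := by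
    rw [abs_mul, hsin]
    have h1 : |K| ≤ B := by
      rw [abs_of_pos hKpos, hK, hB]; nlinarith [habsδ'.2]
    have h2 : |Real.sin δ| ≤ 4 * n * Real.pi * ε / a := by
      calc |Real.sin δ| ≤ |δ| := Real.abs_sin_le_abs
        _ = _ := hδabs
    exact mul_le_mul h1 h2 (abs_nonneg _) (le_of_lt (by positivity))
  have habsnum : ‖(ε:ℂ) + (ε:ℂ)^2 * gammaCoef (K:ℂ) * (α:ℂ)‖ ≤ ε * (1 + B * a) := by
    calc ‖(ε:ℂ) + (ε:ℂ)^2 * gammaCoef (K:ℂ) * (α:ℂ)‖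
        ≤ ‖(ε:ℂ)‖ + ‖(ε:ℂ)^2 * gammaCoef (K:ℂ) * (α:ℂ)‖ := by
          exact norm_add_le _ _
      _ = ε + ε^2 * ‖gammaCoef (K:ℂ)‖ * a := by
          rw [norm_mul, norm_mul, norm_pow, Complex.norm_real, Real.norm_eq_abs, Complex.norm_real, Real.norm_eq_abs,
            abs_of_pos hε]
      _ ≤ ε + ε * (B * a) := by
          have : ε^2 * ‖gammaCoef (K:ℂ)‖ * a ≤ ε * (B * a) := by
            have h1 : ε^2 ≤ ε := by nlinarith
            have h2 : ε^2 * ‖gammaCoef (K:ℂ)‖ ≤ ε * B := by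
              apply mul_le_mul h1 habsγ (norm_nonneg _) (le_of_lt hε)
            calc ε^2 * ‖gammaCoef (K:ℂ)‖ * a ≤ ε * B * a :=
                  mul_le_mul_of_nonneg_right h2 (le_of_lt ha0)
              _ = ε * (B * a) := by ring
          linarith
      _ = ε * (1 + B * a) := by ring
  rw [norm_div, norm_mul, norm_mul, Complex.norm_real, Real.norm_eq_abs, Complex.norm_real, Real.norm_eq_abs, Complex.norm_real, Real.norm_eq_abs]
  rw [abs_of_pos hc1, ha]
  have hden : 0 < |α| * (Real.cos K + 1) := by positivity
  rw [div_le_iff₀ hden]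
  have hfinal1 : ‖(ε:ℂ) + (ε:ℂ)^2 * gammaCoef (K:ℂ) * (α:ℂ)‖ * |K * Real.sin K|
      ≤ (ε * (1 + B * a)) * (B * (4 * n * Real.pi * ε / a)) := by
    apply mul_le_mul habsnum habsKs (abs_nonneg _) (by positivity)
  have hc1' : 1 ≤ Real.cos K + 1 := by rw [hcos]; nlinarith [Real.cos_le_one δ]
  have hC0 : 0 ≤ (1 + B * a) * (B * (4 * n * Real.pi / a)) / a := by positivity
  have hkey2 : (ε * (1 + B * a)) * (B * (4 * n * Real.pi * ε / a))
      = ((1 + B * a) * (B * (4 * n * Real.pi / a)) / a * ε) * (a * 1) * ε := by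
    field_simp
  calc ‖(ε:ℂ) + (ε:ℂ)^2 * gammaCoef (K:ℂ) * (α:ℂ)‖ * |K * Real.sin K|
      ≤ (ε * (1 + B * a)) * (B * (4 * n * Real.pi * ε / a)) := hfinal1
    _ = ((1 + B * a) * (B * (4 * n * Real.pi / a)) / a * ε) * (a * 1) * ε := hkey2
    _ ≤ ((1 + B * a) * (B * (4 * n * Real.pi / a)) / a * ε) * (a * (Real.cos K + 1)) * 1 := by
        gcongr <;> first | positivity | exact hc1' | exact le_of_lt hε1 | linarith
    _ = (1 + B * a) * (B * (4 * n * Real.pi / a)) / a * ε * (|α| * (Real.cos K + 1)) := by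
        rw [← ha]; ring
end
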